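/- Let Φ be the MPP instance reduced from a 3SAT instance (X, C) with n variables and m clauses (as described in the context). Then Φ admits a solution with makespan at most m+2 if and only if (X, C) is satisfiable. -/

import Mathlib

/-!
Formalization of multi-robot path planning on graphs (MPP).

An MPP instance consists of a connected simple graph `G` on a vertex type `V`,
a finite set of robots (an index type `R`), and injective start/goal
configurations `xI xG : R → V`.  A scheduled path is a map `ℕ → V`.
-/

namespace MPPFormal

variable {V R : Type}

/-- The arrival time of a path `p` with goal `g`: the smallest time `t`
with `p t = g`. -/
noncomputable def arrivalTime (g : V) (p : ℕ → V) : ℕ := sInf {t | p t = g}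

/-- A feasible scheduled path from `s` to `g` in the graph `G`:
it starts at `s`, reaches `g` at some time, stays at `g` forever after the
first time it reaches `g`, and at every time step it either traverses an
edge of `G` or stays put. -/
def FeasiblePath (G : SimpleGraph V) (s g : V) (p : ℕ → V) : Prop :=
  p 0 = s ∧ (∃ t, p t = g) ∧ (∀ t, arrivalTime g p ≤ t → p t = g) ∧
    ∀ t, G.Adj (p t) (p (t + 1)) ∨ p t = p (t + 1)

/-- Two scheduled paths collide if they meet at the same vertex at the same
time, or if they swap along an edge head-on. -/
def Collide (p q : ℕ → V) : Prop :=
  (∃ t, p t = q t) ∨ ∃ t, p t = q (t + 1) ∧ p (t + 1) = q t ∧ p t ≠ p (t + 1)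

/-- The length of a scheduled path: the number of time steps at which it
actually moves. -/
noncomputable def pathLen (p : ℕ → V) : ℕ := Set.ncard {t | p t ≠ p (t + 1)}

/-- A solution to the MPP instance `(G, R, xI, xG)`: a family of pairwise
non-colliding feasible paths, one per robot. -/
def IsSolution (G : SimpleGraph V) (xI xG : R → V) (p : R → ℕ → V) : Prop :=
  (∀ i, FeasiblePath G (xI i) (xG i) (p i)) ∧
    Pairwise fun i j => ¬ Collide (p i) (p j)

/-- `(G, xI, xG)` together with the robot index type `R` forms an MPP
instance: the graph is connected and the start and goal configurations are
injective. -/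
def IsMPPInstance (G : SimpleGraph V) (xI xG : R → V) : Prop :=
  G.Connected ∧ Function.Injective xI ∧ Function.Injective xG

variable [Fintype R]

/-- Total arrival time of a solution. -/
noncomputable def totalTime (xG : R → V) (p : R → ℕ → V) : ℕ :=
  ∑ i, arrivalTime (xG i) (p i)

/-- Makespan (last arrival time) of a solution. -/
noncomputable def makespan (xG : R → V) (p : R → ℕ → V) : ℕ :=
  Finset.univ.sup fun i => arrivalTime (xG i) (p i)

/-- Total distance traveled in a solution. -/
noncomputable def totalDist (p : R → ℕ → V) : ℕ := ∑ i, pathLen (p i)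

/-- Maximum single-robot distance of a solution. -/
noncomputable def maxDist (p : R → ℕ → V) : ℕ :=
  Finset.univ.sup fun i => pathLen (p i)

/-- Minimum total arrival time over all solutions. -/
noncomputable def minTotalTime (G : SimpleGraph V) (xI xG : R → V) : ℕ :=
  sInf {c | ∃ p, IsSolution G xI xG p ∧ totalTime xG p = c}

/-- Minimum makespan over all solutions. -/
noncomputable def minMakespan (G : SimpleGraph V) (xI xG : R → V) : ℕ :=
  sInf {c | ∃ p, IsSolution G xI xG p ∧ makespan xG p = c}

/-- Minimum total distance over all solutions. -/
noncomputable def minTotalDist (G : SimpleGraph V) (xI xG : R → V) : ℕ :=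
  sInf {c | ∃ p, IsSolution G xI xG p ∧ totalDist p = c}

/-- Minimum maximum distance over all solutions. -/
noncomputable def minMaxDist (G : SimpleGraph V) (xI xG : R → V) : ℕ :=
  sInf {c | ∃ p, IsSolution G xI xG p ∧ maxDist p = c}

end MPPFormal

/-!
The reduction from 3SAT to MPP.

A 3SAT instance over `n` variables with `m` clauses assigns to each clause
`j : Fin m` three literals; a literal is a pair `(i, b) : Fin n × Bool`,
`b = true` meaning the non-negated variable `x_i` and `b = false` the
negated literal `¬ x_i`.  The three literals of each clause involve three
distinct variables.
-/

namespace MPPFormal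

/-- A 3SAT instance with variables `x_1, …, x_n` and clauses `c_1, …, c_m`. -/
structure ThreeSat (n m : ℕ) where
  lit : Fin m → Fin 3 → Fin n × Bool
  distinctVars : ∀ j (k k' : Fin 3), k ≠ k' → (lit j k).1 ≠ (lit j k').1

/-- An assignment `a` satisfies the instance if every clause contains a true
literal. -/
def ThreeSat.SatisfiedBy {n m : ℕ} (sat : ThreeSat n m) (a : Fin n → Bool) : Prop :=
  ∀ j, ∃ k, a (sat.lit j k).1 = (sat.lit j k).2

/-- Satisfiability of a 3SAT instance. -/
def ThreeSat.Satisfiable {n m : ℕ} (sat : ThreeSat n m) : Prop :=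
  ∃ a, sat.SatisfiedBy a

/-- Vertices of the MPP instance `Φ` reduced from a 3SAT instance with `n`
variables and `m` clauses:
* `vx i` is the left endpoint `v_{x_i}` of the `i`-th variable strip (start of
  the variable robot `r_{x_i}`);
* `vxg i` is the right endpoint `v_{x_i}^g` (goal of `r_{x_i}`);
* `mid i side k` is the interior vertex of the `i`-th upper (`side = true`)
  or lower (`side = false`) path lying at distance `k + 1` from `vx i`
  (each of the two paths has length `m + 2`, hence `m + 1` interior
  vertices, `k : Fin (m+1)`);
* `vc j` is the start vertex `v_{c_j}` of the clause robot `r_{c_j}`;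
* `vcg j` is its goal vertex `v_{c_j}^g`. -/
inductive PhiV (n m : ℕ) where
  | vx (i : Fin n)
  | vxg (i : Fin n)
  | mid (i : Fin n) (side : Bool) (k : Fin (m + 1))
  | vc (j : Fin m)
  | vcg (j : Fin m)
deriving DecidableEq

/-- Base relation generating the edges of `Φ`:
the two length-`(m+2)` paths of each variable strip; an edge from `v_{c_j}`
to the vertex at distance `j + 1` (`1`-indexed: distance `j`) from `v_{x_i}`
on the upper (resp. lower) path of `x_i` for each non-negated (resp. negated)
literal of `c_j`; the path `v_{c_1}^g - ⋯ - v_{c_m}^g`; and edges from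
`v_{c_m}^g` to every `v_{x_i}`. -/
def phiRel {n m : ℕ} (sat : ThreeSat n m) : PhiV n m → PhiV n m → Prop
  | PhiV.vx i, PhiV.mid i' _ k => i = i' ∧ (k : ℕ) = 0
  | PhiV.mid i s k, PhiV.mid i' s' k' => i = i' ∧ s = s' ∧ (k' : ℕ) = (k : ℕ) + 1
  | PhiV.mid i _ k, PhiV.vxg i' => i = i' ∧ (k : ℕ) = m
  | PhiV.vc j, PhiV.mid i s k => (∃ l, sat.lit j l = (i, s)) ∧ (k : ℕ) = (j : ℕ)
  | PhiV.vcg j, PhiV.vcg j' => (j' : ℕ) = (j : ℕ) + 1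
  | PhiV.vcg j, PhiV.vx _ => (j : ℕ) + 1 = m
  | _, _ => False

/-- The graph of the reduced MPP instance `Φ`. -/
def phiGraph {n m : ℕ} (sat : ThreeSat n m) : SimpleGraph (PhiV n m) :=
  SimpleGraph.fromRel (phiRel sat)

/-- Start configuration of `Φ`: the variable robot `r_{x_i}` (index
`Sum.inl i`) starts at `v_{x_i}`; the clause robot `r_{c_j}` (index
`Sum.inr j`) starts at `v_{c_j}`. -/
def phiStart {n m : ℕ} : Fin n ⊕ Fin m → PhiV n m :=
  Sum.elim PhiV.vx PhiV.vc

/-- Goal configuration of `Φ`: `r_{x_i}` must reach `v_{x_i}^g` and `r_{c_j}`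
must reach `v_{c_j}^g`. -/
def phiGoal {n m : ℕ} : Fin n ⊕ Fin m → PhiV n m :=
  Sum.elim PhiV.vxg PhiV.vcg

end MPPFormal

/-!
Every robot of `Φ` has exactly `m + 2` steps to cover a distance of `m + 2`, so it must
walk a shortest path. For `r_{x_i}` this means running straight along one of the two paths
of its strip; for `r_{c_j}` it means entering the path of one of its literals at distance
`j + 1` from `v_{x_i}` and walking back to `v_{x_i}` between times `1` and `j + 2`. If that
path were the one taken by `r_{x_i}`, the two robots would run towards each other on the
same path and meet (at a vertex or head-on on an edge). Hence setting `x_i` true exactly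
when `r_{x_i}` takes the lower path satisfies every clause. Conversely, given a satisfying
assignment, send `r_{x_i}` along the path of its false literal and `r_{c_j}` through the
path of a true literal: variable and clause robots then never share a vertex except
`v_{x_i}`, which they visit at different times, and two clause robots are always at
different distances from `v_{c_1}^g`.

Shortest-path arguments are made with potentials `f : V → ℕ` that drop by at most one
along an edge: a schedule that lowers such a potential by `T` in `T` steps lowers it by
exactly one at every step.
-/

namespace MPPFormal

section Schedules

variable {V : Type}

def MovesAlong (G : SimpleGraph V) (p : ℕ → V) : Prop :=
  ∀ t, G.Adj (p t) (p (t + 1)) ∨ p t = p (t + 1)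

theorem Collide.symm {p q : ℕ → V} (h : Collide p q) : Collide q p := by
  rcases h with ⟨t, hmeet⟩ | ⟨t, h₁, h₂, hmove⟩
  · exact .inl ⟨t, hmeet.symm⟩
  · exact .inr ⟨t, h₂.symm, h₁.symm, fun h => hmove (h₁.trans (h.symm.trans h₂.symm))⟩

theorem not_collide_of_visits_before {p q : ℕ → V}
    (h : ∀ t t', p t = q t' → t < t') : ¬ Collide p q := by
  rintro (⟨t, hmeet⟩ | ⟨t, -, hswap, -⟩)
  · exact lt_irrefl t (h t t hmeet)
  · exact (h _ _ hswap).not_gt t.lt_succ_self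

theorem not_collide_of_clock {g : V → ℕ} {p q : ℕ → V} {A B T : ℕ}
    (hp : ∀ t ≤ T, g (p t) + t = A) (hq : ∀ t ≤ T, g (q t) + t = B) (hAB : A ≠ B)
    (hpT : ∀ t ≥ T, p t = p T) (hqT : ∀ t ≥ T, q t = q T) : ¬ Collide p q := by
  have hgoal : p T ≠ q T := fun h => hAB (by rw [← hp T le_rfl, ← hq T le_rfl, h])
  rintro (⟨t, hmeet⟩ | ⟨t, h₁, h₂, hmove⟩)
  · rcases le_or_gt t T with ht | ht
    · have := hp t ht; have := hq t ht; rw [hmeet] at *; omega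
    · exact hgoal (by rw [← hpT t ht.le, ← hqT t ht.le, hmeet])
  · rcases lt_or_ge t T with ht | ht
    · have := hp t ht.le; have := hp (t + 1) ht; have := hq t ht.le; have := hq (t + 1) ht
      rw [h₁] at *; rw [h₂] at *; omega
    · exact hmove (by rw [hpT t ht, hpT (t + 1) (by omega)])

/-- Two robots crossing the same stretch `w 0, …, w c` in opposite directions during the
same `c` steps meet at its middle vertex (`c` even) or swap along its middle edge (`c` odd). -/
theorem collide_of_opposite_traversal {p q w : ℕ → V} {a c : ℕ}
    (hw : ∀ t < c, w t ≠ w (t + 1))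
    (hp : ∀ t ≤ c, p (t + a) = w t) (hq : ∀ t ≤ c, q (t + a) = w (c - t)) :
    Collide p q := by
  obtain ⟨d, rfl | rfl⟩ := Nat.even_or_odd' c
  · exact .inl ⟨d + a, by rw [hp d (by omega), hq d (by omega)]; congr 1; omega⟩
  · have hsucc : d + a + 1 = (d + 1) + a := by omega
    refine .inr ⟨d + a, ?_, ?_, ?_⟩
    · rw [hp d (by omega), hsucc, hq (d + 1) (by omega)]
      congr 1; omega
    · rw [hsucc, hp (d + 1) (by omega), hq d (by omega)]
      congr 1; omega
    · rw [hp d (by omega), hsucc, hp (d + 1) (by omega)]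
      exact hw d (by omega)

variable {G : SimpleGraph V} {f : V → ℕ} {p : ℕ → V}

theorem le_add_of_movesAlong (hf : ∀ u v, G.Adj u v → f u ≤ f v + 1) (hp : MovesAlong G p)
    (t s : ℕ) : f (p t) ≤ f (p (t + s)) + s := by
  induction s with
  | zero => simp
  | succ s ih =>
    have : f (p (t + s)) ≤ f (p (t + s + 1)) + 1 := by
      rcases hp (t + s) with h | h
      · exact hf _ _ h
      · rw [h]; omega
    show f (p t) ≤ f (p (t + s + 1)) + (s + 1)
    omega

theorem add_eq_of_tight_descent (hf : ∀ u v, G.Adj u v → f u ≤ f v + 1) (hp : MovesAlong G p)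
    {T : ℕ} (hT : f (p 0) = f (p T) + T) {t : ℕ} (ht : t ≤ T) : f (p t) + t = f (p 0) := by
  have h₁ := le_add_of_movesAlong hf hp 0 t
  have h₂ := le_add_of_movesAlong hf hp t (T - t)
  rw [zero_add] at h₁
  rw [Nat.add_sub_cancel' ht] at h₂
  omega

theorem adj_of_tight_descent (hf : ∀ u v, G.Adj u v → f u ≤ f v + 1) (hp : MovesAlong G p)
    {T : ℕ} (hT : f (p 0) = f (p T) + T) {t : ℕ} (ht : t < T) :
    G.Adj (p t) (p (t + 1)) ∧ f (p (t + 1)) + 1 = f (p t) := by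
  have h₁ := add_eq_of_tight_descent hf hp hT ht.le
  have h₂ := add_eq_of_tight_descent hf hp hT (t := t + 1) ht
  refine ⟨(hp t).resolve_right fun h => ?_, by omega⟩
  rw [← h] at h₂
  omega

theorem arrivalTime_eq {g : V} {T : ℕ} (h : ∀ t, p t = g ↔ T ≤ t) : arrivalTime g p = T := by
  rw [arrivalTime, show {t | p t = g} = Set.Ici T from Set.ext h, csInf_Ici]

theorem feasiblePath_of_eq_goal_iff {s g : V} {T : ℕ} (h₀ : p 0 = s)
    (h : ∀ t, p t = g ↔ T ≤ t) (hp : MovesAlong G p) : FeasiblePath G s g p :=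
  ⟨h₀, ⟨T, (h T).2 le_rfl⟩, fun t ht => (h t).2 (arrivalTime_eq h ▸ ht), hp⟩

theorem eq_goal_of_makespan_le {R : Type} [Fintype R] {xI xG : R → V} {P : R → ℕ → V}
    (hP : ∀ r, FeasiblePath G (xI r) (xG r) (P r)) {T : ℕ} (hT : makespan xG P ≤ T) (r : R) :
    P r T = xG r :=
  (hP r).2.2.1 T ((Finset.le_sup (f := fun r => arrivalTime (xG r) (P r))
    (Finset.mem_univ r)).trans hT)

end Schedules

section Reduction

variable {n m : ℕ}

/-- The vertex at distance `d` from `v_{x_i}` on the upper (`s = true`) or lower path of the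
`i`-th strip; it is `v_{x_i}^g` for every `d ≥ m + 2`. -/
def stripVertex (i : Fin n) (s : Bool) : ℕ → PhiV n m
  | 0 => .vx i
  | d + 1 => if h : d ≤ m then .mid i s ⟨d, by omega⟩ else .vxg i

/-- A lower bound for the distance to the nearest `v_{x_i}^g`. -/
def exitPotential : PhiV n m → ℕ
  | .vx _ => m + 2
  | .vxg _ => 0
  | .mid _ _ k => m + 1 - k
  | .vc j => m + 2 - j
  | .vcg _ => m + 3

/-- The distance to `v_{c_1}^g`. -/
def clausePotential : PhiV n m → ℕ
  | .vx _ => m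
  | .vxg _ => 2 * m + 2
  | .mid _ _ k => m + 1 + k
  | .vc j => m + 2 + j
  | .vcg j => j

variable {sat : ThreeSat n m}

theorem phiGraph_adj {u v : PhiV n m} :
    (phiGraph sat).Adj u v ↔ u ≠ v ∧ (phiRel sat u v ∨ phiRel sat v u) :=
  SimpleGraph.fromRel_adj _ _ _

theorem le_add_one_of_phiRel {f : PhiV n m → ℕ}
    (hf : ∀ u v, phiRel sat u v → f u ≤ f v + 1 ∧ f v ≤ f u + 1) :
    ∀ u v, (phiGraph sat).Adj u v → f u ≤ f v + 1 := by
  intro u v h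
  rcases (phiGraph_adj.1 h).2 with h | h
  exacts [(hf u v h).1, (hf v u h).2]

theorem exitPotential_le_add_one :
    ∀ u v, (phiGraph sat).Adj u v → exitPotential u ≤ exitPotential v + 1 := by
  refine le_add_one_of_phiRel fun u v h => ?_
  cases u <;> cases v <;> simp only [phiRel] at h <;> simp only [exitPotential] <;> omega

theorem clausePotential_le_add_one :
    ∀ u v, (phiGraph sat).Adj u v → clausePotential u ≤ clausePotential v + 1 := by
  refine le_add_one_of_phiRel fun u v h => ?_
  cases u <;> cases v <;> simp only [phiRel] at h <;> simp only [clausePotential] <;> omega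

section StripVertex

variable {i i' : Fin n} {s s' : Bool} {d d' : ℕ}

theorem stripVertex_succ_of_le (h : d ≤ m) :
    stripVertex (m := m) i s (d + 1) = .mid i s ⟨d, by omega⟩ :=
  dif_pos h

theorem stripVertex_of_le (h : m + 2 ≤ d) : stripVertex (m := m) i s d = .vxg i := by
  obtain ⟨d, rfl⟩ := Nat.exists_eq_add_of_le' (show 1 ≤ d by omega)
  exact dif_neg (by omega)

theorem stripVertex_ne_vc (j : Fin m) : stripVertex i s d ≠ .vc j := by
  unfold stripVertex; split <;> (try split) <;> simp

theorem stripVertex_ne_vcg (j : Fin m) : stripVertex i s d ≠ .vcg j := by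
  unfold stripVertex; split <;> (try split) <;> simp

theorem eq_of_stripVertex_eq (h : stripVertex (m := m) i s d = stripVertex i' s' d') : i = i' := by
  unfold stripVertex at h
  split at h <;> split at h <;> (try split at h) <;> (try split at h) <;> grind

theorem eq_zero_of_stripVertex_eq (h : stripVertex (m := m) i s d = stripVertex i' s' d')
    (hd' : d' ≤ m + 1) (hne : (i, s) ≠ (i', s')) : d = 0 ∧ d' = 0 := by
  unfold stripVertex at h
  split at h <;> split at h <;> (try split at h) <;> (try split at h) <;> grind

theorem exitPotential_stripVertex : exitPotential (stripVertex (m := m) i s d) = m + 2 - d := by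
  rcases d with _ | d
  · rfl
  · rcases le_or_gt d m with h | h
    · rw [stripVertex_succ_of_le h]; simp only [exitPotential]; omega
    · rw [stripVertex_of_le (by omega)]; simp only [exitPotential]; omega

theorem clausePotential_stripVertex (h : d ≤ m + 1) :
    clausePotential (stripVertex (m := m) i s d) = m + d := by
  rcases d with _ | d
  · rfl
  · rw [stripVertex_succ_of_le (by omega)]; simp only [clausePotential]; omega

theorem stripVertex_eq_vxg_iff : stripVertex (m := m) i s d = .vxg i ↔ m + 2 ≤ d := by
  refine ⟨fun h => ?_, stripVertex_of_le⟩
  have := exitPotential_stripVertex (m := m) (i := i) (s := s) (d := d)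
  rw [h] at this; simp only [exitPotential] at this; omega

theorem stripVertex_adj_succ (i : Fin n) (s : Bool) (hd : d ≤ m + 1) :
    (phiGraph sat).Adj (stripVertex i s d) (stripVertex i s (d + 1)) := by
  rw [phiGraph_adj]
  rcases d with _ | d
  · rw [stripVertex_succ_of_le (by omega)]
    simp [stripVertex, phiRel]
  rw [stripVertex_succ_of_le (by omega)]
  rcases le_or_gt (d + 1) m with h | h
  · rw [stripVertex_succ_of_le h]; simp [phiRel]
  · rw [stripVertex_of_le (by omega)]; simp [phiRel]; omega

theorem movesAlong_stripVertex (i : Fin n) (s : Bool) :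
    MovesAlong (phiGraph sat) (stripVertex i s) := by
  intro t
  rcases le_or_gt t (m + 1) with h | h
  · exact .inl (stripVertex_adj_succ i s h)
  · exact .inr (by rw [stripVertex_of_le h, stripVertex_of_le (by omega)])

end StripVertex

section Neighbours

variable {i : Fin n} {s : Bool} {d : ℕ} {v : PhiV n m}

theorem exists_eq_stripVertex_one_of_adj_vx (hadj : (phiGraph sat).Adj (.vx i) v)
    (hv : exitPotential v + 1 = m + 2) : ∃ s, v = stripVertex i s 1 := by
  simp only [stripVertex_succ_of_le (Nat.zero_le m)]
  cases v <;> simp only [phiGraph_adj, phiRel, exitPotential] at hadj hv ⊢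
  case mid s _ => exact ⟨s, by grind⟩
  all_goals grind

theorem eq_stripVertex_succ_of_adj (hd : 1 ≤ d) (hadj : (phiGraph sat).Adj (stripVertex i s d) v)
    (hv : exitPotential v + 1 = exitPotential (stripVertex (m := m) i s d)) :
    v = stripVertex i s (d + 1) := by
  rw [exitPotential_stripVertex] at hv
  obtain ⟨k, rfl⟩ := Nat.exists_eq_add_of_le' hd
  rw [stripVertex_succ_of_le (by omega)] at hadj
  rcases le_or_gt (k + 1) m with hk | hk
  · rw [stripVertex_succ_of_le hk]
    cases v <;> simp only [phiGraph_adj, phiRel, exitPotential] at hadj hv ⊢ <;> grind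
  · rw [stripVertex_of_le (by omega)]
    cases v <;> simp only [phiGraph_adj, phiRel, exitPotential] at hadj hv ⊢ <;> grind

theorem exists_eq_stripVertex_of_adj_vc {j : Fin m} (hadj : (phiGraph sat).Adj (.vc j) v) :
    ∃ l, v = stripVertex (sat.lit j l).1 (sat.lit j l).2 (j + 1) := by
  simp only [stripVertex_succ_of_le (show (j : ℕ) ≤ m by omega)]
  cases v <;> simp only [phiGraph_adj, phiRel] at hadj ⊢ <;> grind

theorem eq_stripVertex_of_adj_succ (hd : 1 ≤ d) (hdm : d ≤ m)
    (hadj : (phiGraph sat).Adj (stripVertex i s (d + 1)) v)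
    (hv : clausePotential v + 1 = clausePotential (stripVertex (m := m) i s (d + 1))) :
    v = stripVertex i s d := by
  rw [clausePotential_stripVertex (by omega)] at hv
  obtain ⟨k, rfl⟩ := Nat.exists_eq_add_of_le' hd
  rw [stripVertex_succ_of_le hdm] at hadj
  rw [stripVertex_succ_of_le (by omega)]
  cases v <;> simp only [phiGraph_adj, phiRel, clausePotential] at hadj hv ⊢ <;> grind

end Neighbours

theorem exists_strip_of_vx_to_vxg {i : Fin n} {p : ℕ → PhiV n m} (hp : MovesAlong (phiGraph sat) p)
    (h₀ : p 0 = .vx i) (hT : p (m + 2) = .vxg i) :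
    ∃ s, ∀ t ≤ m + 2, p t = stripVertex i s t := by
  have hdesc : ∀ t < m + 2, (phiGraph sat).Adj (p t) (p (t + 1)) ∧
      exitPotential (p (t + 1)) + 1 = exitPotential (p t) :=
    fun t ht => adj_of_tight_descent exitPotential_le_add_one hp
      (by rw [h₀, hT]; simp only [exitPotential]; omega) ht
  obtain ⟨hadj, hv⟩ := hdesc 0 (by omega)
  rw [h₀] at hadj hv
  obtain ⟨s, hs⟩ := exists_eq_stripVertex_one_of_adj_vx hadj hv
  refine ⟨s, fun t ht => ?_⟩
  induction t with
  | zero => exact h₀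
  | succ t ih =>
    rcases t with _ | t
    · exact hs
    obtain ⟨hadj, hv⟩ := hdesc (t + 1) ht
    rw [ih (by omega)] at hadj hv
    exact eq_stripVertex_succ_of_adj (by omega) hadj hv

theorem exists_literal_of_vc_to_vcg {j : Fin m} {p : ℕ → PhiV n m}
    (hp : MovesAlong (phiGraph sat) p) (h₀ : p 0 = .vc j) (hT : p (m + 2) = .vcg j) :
    ∃ l, ∀ t ≤ (j : ℕ), p (t + 1) = stripVertex (sat.lit j l).1 (sat.lit j l).2 (j - t + 1) := by
  have hdesc : ∀ t < m + 2, (phiGraph sat).Adj (p t) (p (t + 1)) ∧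
      clausePotential (p (t + 1)) + 1 = clausePotential (p t) :=
    fun t ht => adj_of_tight_descent clausePotential_le_add_one hp
      (by rw [h₀, hT]; simp only [clausePotential]; omega) ht
  obtain ⟨hadj, -⟩ := hdesc 0 (by omega)
  rw [h₀] at hadj
  obtain ⟨l, hl⟩ := exists_eq_stripVertex_of_adj_vc hadj
  refine ⟨l, fun t ht => ?_⟩
  induction t with
  | zero => exact hl
  | succ t ih =>
    obtain ⟨hadj, hv⟩ := hdesc (t + 1) (by omega)
    rw [ih (by omega)] at hadj hv
    rw [eq_stripVertex_of_adj_succ (by omega) (by omega) hadj hv]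
    congr 1; omega

theorem satisfiable_of_isSolution {p : Fin n ⊕ Fin m → ℕ → PhiV n m}
    (hsol : IsSolution (phiGraph sat) phiStart phiGoal p) (hmk : makespan phiGoal p ≤ m + 2) :
    sat.Satisfiable := by
  obtain ⟨hfeas, hcol⟩ := hsol
  have hend := eq_goal_of_makespan_le hfeas hmk
  choose side hside using fun i =>
    exists_strip_of_vx_to_vxg (hfeas (.inl i)).2.2.2 (hfeas (.inl i)).1 (hend (.inl i))
  choose l hl using fun j =>
    exists_literal_of_vc_to_vcg (hfeas (.inr j)).2.2.2 (hfeas (.inr j)).1 (hend (.inr j))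
  refine ⟨fun i => !side i, fun j => ⟨l j, ?_⟩⟩
  have hq := hl j
  generalize sat.lit j (l j) = x at hq ⊢
  obtain ⟨i, b⟩ := x
  by_contra hb
  obtain rfl : b = side i := by cases b <;> cases h : side i <;> simp [h] at hb ⊢
  refine hcol Sum.inl_ne_inr (collide_of_opposite_traversal (a := 1)
    (w := fun t => stripVertex i (side i) (t + 1)) (fun t ht => ?_)
    (fun t ht => hside i _ (by omega)) hq)
  exact (stripVertex_adj_succ (sat := sat) i (side i) (by omega)).ne

/-- After returning to `v_{x_i}` at time `j + 2`, the robot walks down the goal path and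
stops at `v_{c_j}^g` at time `m + 2`. -/
def clausePath (j : Fin m) (i : Fin n) (s : Bool) (t : ℕ) : PhiV n m :=
  if t = 0 then .vc j
  else if h : t ≤ j + 2 then stripVertex i s (j + 2 - t)
  else .vcg ⟨max j (m + j + 2 - t), by have := j.isLt; omega⟩

section ClausePath

variable {j : Fin m} {i : Fin n} {s : Bool} {t : ℕ}

theorem clausePath_of_pos_of_le (h₀ : 0 < t) (h : t ≤ j + 2) :
    clausePath j i s t = stripVertex i s (j + 2 - t) := by
  rw [clausePath, if_neg (by omega), dif_pos h]

theorem clausePath_of_le (h : m + 2 ≤ t) : clausePath j i s t = .vcg j := by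
  have := j.isLt
  rw [clausePath, if_neg (by omega), dif_neg (by omega)]
  congr; omega

theorem clausePotential_clausePath (h : t ≤ m + 2) :
    clausePotential (clausePath j i s t) + t = m + 2 + j := by
  have := j.isLt
  unfold clausePath
  split_ifs with h₀ h₁
  · subst h₀; rfl
  · rw [clausePotential_stripVertex (by omega)]; omega
  · simp only [clausePotential]; omega

theorem clausePath_eq_vcg_iff : clausePath j i s t = .vcg j ↔ m + 2 ≤ t := by
  refine ⟨fun h => ?_, clausePath_of_le⟩
  by_contra ht
  have := clausePotential_clausePath (j := j) (i := i) (s := s) (t := t) (by omega)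
  rw [h] at this; simp only [clausePotential] at this; omega

theorem movesAlong_clausePath {l : Fin 3} (hl : sat.lit j l = (i, s)) :
    MovesAlong (phiGraph sat) (clausePath j i s) := by
  intro t
  have := j.isLt
  rcases Nat.eq_zero_or_pos t with rfl | h₀
  · left
    rw [zero_add, clausePath_of_pos_of_le one_pos (by omega),
      show (j : ℕ) + 2 - 1 = j + 1 by omega, stripVertex_succ_of_le (by omega), clausePath,
      if_pos rfl, phiGraph_adj]
    exact ⟨by simp, .inl ⟨⟨l, hl⟩, rfl⟩⟩
  rcases Nat.lt_or_ge t (j + 2) with h₁ | h₁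
  · left
    rw [clausePath_of_pos_of_le h₀ h₁.le, clausePath_of_pos_of_le (by omega) h₁,
      show (j : ℕ) + 2 - t = (j + 2 - (t + 1)) + 1 by omega]
    exact (stripVertex_adj_succ i s (by omega)).symm
  rcases h₁.eq_or_lt with rfl | h₁
  · left
    rw [clausePath_of_pos_of_le h₀ le_rfl, Nat.sub_self, clausePath, if_neg (by omega),
      dif_neg (by omega)]
    simp [stripVertex, phiGraph_adj, phiRel]; omega
  rcases Nat.lt_or_ge t (m + 2) with h₂ | h₂
  · left
    rw [clausePath, clausePath, if_neg (by omega), if_neg (by omega), dif_neg (by omega),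
      dif_neg (by omega)]
    simp [phiGraph_adj, phiRel]; omega
  · right
    rw [clausePath_of_le h₂, clausePath_of_le (by omega)]

end ClausePath

theorem not_collide_stripVertex {i i' : Fin n} (h : i ≠ i') (s s' : Bool) :
    ¬ Collide (stripVertex (m := m) i s) (stripVertex i' s') :=
  not_collide_of_visits_before fun _ _ he => absurd (eq_of_stripVertex_eq he) h

theorem not_collide_stripVertex_clausePath {i i' : Fin n} {s s' : Bool}
    (h : (i, s) ≠ (i', s')) (j : Fin m) : ¬ Collide (stripVertex i s) (clausePath j i' s') := by
  refine not_collide_of_visits_before fun t t' he => ?_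
  unfold clausePath at he
  split_ifs at he with h₀ h₁
  · exact (stripVertex_ne_vc _ he).elim
  · have := eq_zero_of_stripVertex_eq he (by omega) h; omega
  · exact (stripVertex_ne_vcg _ he).elim

theorem not_collide_clausePath {j j' : Fin m} (h : j ≠ j') (i i' : Fin n) (s s' : Bool) :
    ¬ Collide (clausePath j i s) (clausePath j' i' s') :=
  not_collide_of_clock (g := clausePotential) (T := m + 2)
    (fun _ ht => clausePotential_clausePath ht) (fun _ ht => clausePotential_clausePath ht)
    (by simpa [Fin.val_inj] using h)
    (fun _ ht => by rw [clausePath_of_le ht, clausePath_of_le le_rfl])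
    (fun _ ht => by rw [clausePath_of_le ht, clausePath_of_le le_rfl])

theorem exists_solution_of_satisfiedBy {a : Fin n → Bool} (ha : sat.SatisfiedBy a) :
    ∃ p : Fin n ⊕ Fin m → ℕ → PhiV n m,
      IsSolution (phiGraph sat) phiStart phiGoal p ∧ makespan phiGoal p ≤ m + 2 := by
  choose l hl using ha
  have hside : ∀ i j, (i, !a i) ≠ sat.lit j (l j) := fun i j h => by
    have := hl j; rw [← h] at this; simp at this
  refine ⟨Sum.elim (fun i => stripVertex i (!a i))
    (fun j => clausePath j (sat.lit j (l j)).1 (sat.lit j (l j)).2), ⟨?_, ?_⟩, ?_⟩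
  · rintro (i | j)
    · exact feasiblePath_of_eq_goal_iff rfl (fun _ => stripVertex_eq_vxg_iff)
        (movesAlong_stripVertex i _)
    · exact feasiblePath_of_eq_goal_iff rfl (fun _ => clausePath_eq_vcg_iff)
        (movesAlong_clausePath rfl)
  · rintro (i | j) (i' | j') hne
    · exact not_collide_stripVertex (fun h => hne (congrArg _ h)) _ _
    · exact not_collide_stripVertex_clausePath (hside i j') j'
    · exact fun h => not_collide_stripVertex_clausePath (hside i' j) j h.symm
    · exact not_collide_clausePath (fun h => hne (congrArg _ h)) _ _ _ _
  · refine Finset.sup_le fun r _ => le_of_eq ?_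
    rcases r with i | j
    · exact arrivalTime_eq fun _ => stripVertex_eq_vxg_iff
    · exact arrivalTime_eq fun _ => clausePath_eq_vcg_iff

end Reduction

theorem makespan_iff_satisfiable_general {n m : ℕ} (sat : ThreeSat n m) :
    (∃ p : Fin n ⊕ Fin m → ℕ → PhiV n m,
        IsSolution (phiGraph sat) phiStart phiGoal p ∧
        makespan phiGoal p ≤ m + 2) ↔
      sat.Satisfiable :=
  ⟨fun ⟨_, hsol, hmk⟩ => satisfiable_of_isSolution hsol hmk,
    fun ⟨_, ha⟩ => exists_solution_of_satisfiedBy ha⟩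

/-- The reduced MPP instance `Φ` admits a solution with makespan at most
`m + 2` if and only if the 3SAT instance is satisfiable. -/
theorem makespan_iff_satisfiable {n m : ℕ} (hm : 0 < m) (sat : ThreeSat n m) :
    (∃ p : Fin n ⊕ Fin m → ℕ → PhiV n m,
        IsSolution (phiGraph sat) phiStart phiGoal p ∧
        makespan phiGoal p ≤ m + 2) ↔
      sat.Satisfiable :=
  makespan_iff_satisfiable_general sat

end MPPFormal
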